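/- arXiv:1902.05055 — 8 statements merged into one kernel-verified Lean document; each statement's English description precedes it below -/
import Mathlib

section
/- Let r ≥ 1 be an integer, let G be a finite simple graph with independence number α(G), and let c be an edge-colouring of G with colours 1,…,r. Then the vertex set of G can be covered by at most r·α(G) monochromatic components of (G,c). -/
/-- A set of vertices `T` covers a hypergraph with edge family `E` if it meets every edge. -/
def IsCover {V : Type*} (E : Set (Set V)) (T : Set V) : Prop :=
  ∀ e ∈ E, (e ∩ T).Nonempty

/-- The cover number of a hypergraph: minimum size of a cover. -/
noncomputable def coverNumber {V : Type*} (E : Set (Set V)) : ℕ :=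
  sInf {n | ∃ T : Set V, T.ncard = n ∧ IsCover E T}

/-- The `(k,ℓ)`-cover property: any at most `k` edges have a cover of size at most `ℓ`. -/
def CoverProperty {V : Type*} (E : Set (Set V)) (k ℓ : ℕ) : Prop :=
  ∀ S ⊆ E, S.ncard ≤ k → ∃ T : Set V, T.ncard ≤ ℓ ∧ IsCover S T

/-- `E` is an `r`-partite `r`-graph w.r.t. the partition `part`. -/
def IsPartite {V : Type*} (r : ℕ) (part : V → Fin r) (E : Set (Set V)) : Prop :=
  ∀ e ∈ E, ∀ i : Fin r, (e ∩ part ⁻¹' {i}).ncard = 1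

/-- A transversal cover: a cover containing exactly one vertex from each part. -/
def IsTransversalCover {V : Type*} (r : ℕ) (part : V → Fin r) (E : Set (Set V))
    (T : Set V) : Prop :=
  IsCover E T ∧ ∀ i : Fin r, (T ∩ part ⁻¹' {i}).ncard = 1

/-- The `(r,k)`-cover property: any at most `k` edges have a transversal cover. -/
def PartiteCoverProperty {V : Type*} (r : ℕ) (part : V → Fin r) (E : Set (Set V))
    (k : ℕ) : Prop :=
  ∀ S ⊆ E, S.ncard ≤ k → ∃ T : Set V, IsTransversalCover r part S T

/-- The spanning subgraph of `G` consisting of the edges of colour `i`. -/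
def colorSubgraph {V : Type*} (G : SimpleGraph V) {r : ℕ} (c : Sym2 V → Fin r)
    (i : Fin r) : SimpleGraph V where
  Adj u v := G.Adj u v ∧ c s(u, v) = i
  symm := ⟨fun u v h => ⟨h.1.symm, by rw [Sym2.eq_swap]; exact h.2⟩⟩
  loopless := ⟨fun v h => G.loopless.irrefl v h.1⟩

/-- The independence number of a simple graph. -/
noncomputable def alphaNum {V : Type*} (G : SimpleGraph V) : ℕ :=
  sSup {n | ∃ S : Finset V, S.card = n ∧ ∀ u ∈ S, ∀ v ∈ S, u ≠ v → ¬ G.Adj u v}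

/-! A maximum independent set `I` has `α(G)` vertices and, being maximal, dominates `G`: every
vertex lies in `I` or has a neighbour `u ∈ I`, and then it lies in the component of `u` in the
colour of the edge `uv`. So the `r` monochromatic components through the vertices of `I` cover `V`. -/

namespace SimpleGraph

variable {V : Type*} {G : SimpleGraph V}

theorem alphaNum_eq_indepNum (G : SimpleGraph V) : alphaNum G = G.indepNum := by
  unfold alphaNum indepNum
  congr 1
  ext n
  exact exists_congr fun S => by rw [isNIndepSet_iff, and_comm]; rfl

theorem exists_adj_of_maximal_isIndepSet {s : Set V} (hs : Maximal G.IsIndepSet s) {v : V}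
    (hv : v ∉ s) : ∃ u ∈ s, G.Adj u v := by
  by_contra! h
  refine hv (hs.mem_of_prop_insert ?_)
  exact (Set.pairwise_insert_of_notMem hv).2
    ⟨hs.prop, fun u hu => ⟨fun hvu => h u hu hvu.symm, h u hu⟩⟩

theorem exists_reachable_colorSubgraph_of_dominating {r : ℕ} (c : Sym2 V → Fin r) {D : Finset V}
    (hD : ∀ v ∉ D, ∃ u ∈ D, G.Adj u v) (v : V) :
    ∃ p ∈ (Finset.univ : Finset (Fin r)) ×ˢ D, (colorSubgraph G c p.1).Reachable p.2 v := by
  by_cases hv : v ∈ D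
  -- the colour `c s(v, v)` of the non-edge `s(v, v)` serves as a colour without assuming `0 < r`
  · exact ⟨(c s(v, v), v), Finset.mem_product.2 ⟨Finset.mem_univ _, hv⟩, .refl v⟩
  · obtain ⟨u, hu, huv⟩ := hD v hv
    exact ⟨(c s(u, v), u), Finset.mem_product.2 ⟨Finset.mem_univ _, hu⟩,
      Adj.reachable ⟨huv, rfl⟩⟩

end SimpleGraph

theorem stmt0_general {V : Type*} [Fintype V] (r : ℕ)
    (G : SimpleGraph V) (c : Sym2 V → Fin r) :
    ∃ S : Finset (Fin r × V), S.card ≤ r * alphaNum G ∧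
      ∀ v : V, ∃ p ∈ S, (colorSubgraph G c p.1).Reachable p.2 v := by
  obtain ⟨I, hI⟩ := G.maximumIndepSet_exists
  have hdom : ∀ v ∉ I, ∃ u ∈ I, G.Adj u v := fun v hv =>
    SimpleGraph.exists_adj_of_maximal_isIndepSet (hI.isMaximalIndepSet I) (Finset.mem_coe.not.2 hv)
  refine ⟨Finset.univ ×ˢ I, ?_,
    SimpleGraph.exists_reachable_colorSubgraph_of_dominating c hdom⟩
  rw [Finset.card_product, Finset.card_univ, Fintype.card_fin,
    SimpleGraph.maximumIndepSet_card_eq_indepNum I hI, G.alphaNum_eq_indepNum]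

/-- any `r`-edge-coloured finite graph `G` can be covered by at most
`r · α(G)` monochromatic components (a component is specified by its colour and
a representative vertex). -/
theorem stmt0 {V : Type*} [Fintype V] (r : ℕ) (hr : 1 ≤ r)
    (G : SimpleGraph V) (c : Sym2 V → Fin r) :
    ∃ S : Finset (Fin r × V), S.card ≤ r * alphaNum G ∧
      ∀ v : V, ∃ p ∈ S, (colorSubgraph G c p.1).Reachable p.2 v :=
  stmt0_general r G c
end

section
/- Let r ≥ 2 and t ≥ 0 be integers and let H be a critical r-uniform hypergraph with cover number τ(H) = t+1. Then H has at most binomial(r+t, t) edges. -/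
/-!
Deleting an edge `e` of a critical hypergraph lowers the cover number, so some set `T e` of at
most `t` vertices misses `e` but meets every other edge. The pairs `(e, T e)` form a Bollobás
set-pair system, hence there are at most `C(r + t, r)` of them.

Bollobás's inequality `∑ 1 / C(|Aᵢ| + |Bᵢ|, |Aᵢ|) ≤ 1` is proved by induction on the ground set
`X`. For `x ∈ X`, the pairs with `x ∉ Aᵢ`, with `x` removed from `Bᵢ`, form a system on
`X \ {x}`. Summing these `n = |X|` inequalities, a pair with `Bᵢ ≠ ∅` contributes exactly
`n / C(a + b, a)`, because `b / C(a + b - 1, a) = (a + b) / C(a + b, a)`; a pair with `Bᵢ = ∅`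
is the only pair of the system.
-/

open Finset

lemma succ_div_choose_add_eq (a k : ℕ) :
    ((k + 1 : ℕ) : ℚ) / (a + k).choose a = (a + k + 1 : ℕ) / (a + k + 1).choose a := by
  have h := Nat.choose_mul_succ_eq (a + k) a
  rw [show a + k + 1 - a = k + 1 by omega] at h
  rw [div_eq_div_iff (Nat.cast_ne_zero.mpr (Nat.choose_pos (by omega)).ne')
    (Nat.cast_ne_zero.mpr (Nat.choose_pos (by omega)).ne')]
  norm_cast
  linarith

section SetPairs

variable {α ι : Type*} [DecidableEq α]

lemma sum_sdiff_inv_choose_card_erase {X A B : Finset α} (hA : A ⊆ X) (hB : B ⊆ X)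
    (hAB : Disjoint A B) (hBne : B.Nonempty) :
    ∑ x ∈ X \ A, (((#A + #(B.erase x)).choose #A : ℕ) : ℚ)⁻¹
      = #X * (((#A + #B).choose #A : ℕ) : ℚ)⁻¹ := by
  obtain ⟨k, hk⟩ : ∃ k, #B = k + 1 := Nat.exists_eq_add_one.mpr hBne.card_pos
  have hfilter : (X \ A).filter (· ∈ B) = B := by
    ext x
    simp only [mem_filter, mem_sdiff, and_iff_right_iff_imp]
    exact fun hx => ⟨hB hx, disjoint_right.mp hAB hx⟩
  have hcard : #B + #((X \ A).filter (· ∉ B)) + #A = #X := by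
    have h := card_filter_add_card_filter_not (s := X \ A) (· ∈ B)
    rw [hfilter, card_sdiff_of_subset hA] at h
    have := card_le_card hA
    omega
  have hin : ∑ x ∈ B, (((#A + #(B.erase x)).choose #A : ℕ) : ℚ)⁻¹
      = #B * (((#A + k).choose #A : ℕ) : ℚ)⁻¹ := by
    rw [← nsmul_eq_mul, ← sum_const]
    refine sum_congr rfl fun x hx => ?_
    rw [card_erase_of_mem hx, hk, Nat.add_sub_cancel]
  have hout : ∑ x ∈ (X \ A).filter (· ∉ B), (((#A + #(B.erase x)).choose #A : ℕ) : ℚ)⁻¹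
      = #((X \ A).filter (· ∉ B)) * (((#A + #B).choose #A : ℕ) : ℚ)⁻¹ := by
    rw [← nsmul_eq_mul, ← sum_const]
    exact sum_congr rfl fun x hx => by rw [erase_eq_of_notMem (mem_filter.mp hx).2]
  rw [← sum_filter_add_sum_filter_not _ (· ∈ B), hfilter, hin, hout, ← hcard]
  have := succ_div_choose_add_eq #A k
  rw [← hk, show #A + k + 1 = #A + #B by omega] at this
  simp only [div_eq_mul_inv] at this
  rw [this]
  push_cast
  ring

theorem bollobas_sum_inv_choose_le_one_of_subset (X : Finset α) (s : Finset ι)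
    (A B : ι → Finset α) (hAX : ∀ i ∈ s, A i ⊆ X) (hBX : ∀ i ∈ s, B i ⊆ X)
    (hAB : ∀ i ∈ s, Disjoint (A i) (B i))
    (hcross : ∀ i ∈ s, ∀ j ∈ s, i ≠ j → ¬Disjoint (A i) (B j)) :
    ∑ i ∈ s, (((#(A i) + #(B i)).choose #(A i) : ℕ) : ℚ)⁻¹ ≤ 1 := by
  induction X using Finset.strongInduction generalizing s B with
  | H X ih =>
  by_cases hempty : ∃ i ∈ s, B i = ∅
  · obtain ⟨i, hi, hBi⟩ := hempty
    have hs : s = {i} := eq_singleton_iff_unique_mem.mpr ⟨hi, fun j hj => by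
      by_contra hji
      exact hcross j hj i hi hji (hBi ▸ disjoint_empty_right _)⟩
    simp [hs, hBi]
  push Not at hempty
  rcases s.eq_empty_or_nonempty with rfl | ⟨i₀, hi₀⟩
  · simp
  have hXpos : (0 : ℚ) < #X := by
    obtain ⟨x, hx⟩ := hempty i₀ hi₀
    exact_mod_cast card_pos.mpr ⟨x, hBX i₀ hi₀ hx⟩
  have hdelete : ∀ x ∈ X, ∑ i ∈ s with x ∉ A i,
      (((#(A i) + #((B i).erase x)).choose #(A i) : ℕ) : ℚ)⁻¹ ≤ 1 := by
    intro x hx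
    refine ih (X.erase x) (erase_ssubset hx) _ _
      (fun i hi => ?_) (fun i hi => erase_subset_erase x (hBX i (mem_filter.mp hi).1))
      (fun i hi => (hAB i (mem_filter.mp hi).1).mono_right (erase_subset x _))
      (fun i hi j hj hij => ?_)
    · rw [mem_filter] at hi
      exact subset_erase.mpr ⟨hAX i hi.1, hi.2⟩
    · rw [mem_filter] at hi hj
      obtain ⟨y, hyA, hyB⟩ := not_disjoint_iff.mp (hcross i hi.1 j hj.1 hij)
      exact not_disjoint_iff.mpr ⟨y, hyA, mem_erase.mpr ⟨fun h => hi.2 (h ▸ hyA), hyB⟩⟩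
  have hdouble : ∑ x ∈ X, ∑ i ∈ s with x ∉ A i,
      (((#(A i) + #((B i).erase x)).choose #(A i) : ℕ) : ℚ)⁻¹
      = #X * ∑ i ∈ s, (((#(A i) + #(B i)).choose #(A i) : ℕ) : ℚ)⁻¹ := by
    rw [sum_comm' (t' := s) (s' := fun i => X \ A i) (fun x i => by
      simp only [mem_filter, mem_sdiff]; tauto), mul_sum]
    exact sum_congr rfl fun i hi => sum_sdiff_inv_choose_card_erase (hAX i hi) (hBX i hi)
      (hAB i hi) (hempty i hi)
  have := hdouble ▸ sum_le_card_nsmul X _ 1 hdelete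
  rw [nsmul_eq_mul, mul_one] at this
  exact le_of_mul_le_mul_left (by simpa using this) hXpos

theorem bollobas_card_le_choose (s : Finset ι) (A B : ι → Finset α) {a b : ℕ}
    (hA : ∀ i ∈ s, #(A i) = a) (hB : ∀ i ∈ s, #(B i) ≤ b)
    (hAB : ∀ i ∈ s, Disjoint (A i) (B i))
    (hcross : ∀ i ∈ s, ∀ j ∈ s, i ≠ j → ¬Disjoint (A i) (B j)) :
    #s ≤ (a + b).choose a := by
  have hsum := bollobas_sum_inv_choose_le_one_of_subset (s.biUnion fun i => A i ∪ B i) s A B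
    (fun i hi => subset_union_left.trans (subset_biUnion_of_mem (fun i => A i ∪ B i) hi))
    (fun i hi => subset_union_right.trans (subset_biUnion_of_mem (fun i => A i ∪ B i) hi))
    hAB hcross
  have hchoose : (0 : ℚ) < (a + b).choose a := by exact_mod_cast Nat.choose_pos (by omega)
  have hterm : ∀ i ∈ s, (((a + b).choose a : ℕ) : ℚ)⁻¹
      ≤ (((#(A i) + #(B i)).choose #(A i) : ℕ) : ℚ)⁻¹ := fun i hi => by
    rw [hA i hi]
    gcongr
    · exact_mod_cast Nat.choose_pos (by omega)
    · exact hB i hi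
  have := (card_nsmul_le_sum s _ _ hterm).trans hsum
  rw [nsmul_eq_mul, ← div_eq_mul_inv, div_le_one hchoose] at this
  exact_mod_cast this

end SetPairs

section Cover

variable {V : Type*} {E : Set (Set V)}

lemma IsCover.mono {E' : Set (Set V)} {T : Set V} (h : IsCover E T) (hE : E' ⊆ E) :
    IsCover E' T :=
  fun e he => h e (hE he)

lemma coverNumber_le_ncard {T : Set V} (h : IsCover E T) : coverNumber E ≤ T.ncard :=
  Nat.sInf_le ⟨T, rfl, h⟩

lemma exists_isCover_ncard_eq_coverNumber (h : ∃ T, IsCover E T) :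
    ∃ T, IsCover E T ∧ T.ncard = coverNumber E := by
  obtain ⟨T, h₀⟩ := h
  obtain ⟨T', hT', hcover⟩ := Nat.sInf_mem (s := {n | ∃ T : Set V, T.ncard = n ∧ IsCover E T})
    ⟨T.ncard, T, rfl, h₀⟩
  exact ⟨T', hcover, hT'⟩

lemma exists_isCover_of_coverNumber_ne_zero (h : coverNumber E ≠ 0) : ∃ T, IsCover E T := by
  by_contra hnone
  refine h (Nat.sInf_eq_zero.mpr (Or.inr (Set.eq_empty_of_forall_notMem ?_)))
  rintro n ⟨T, -, hT⟩
  exact hnone ⟨T, hT⟩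

lemma exists_small_cover_avoiding_of_critical
    (hcrit : ∀ E' ⊂ E, coverNumber E' < coverNumber E) (hE : coverNumber E ≠ 0)
    {e : Set V} (he : e ∈ E) :
    ∃ T : Set V, T.ncard < coverNumber E ∧ Disjoint e T ∧ ∀ f ∈ E, f ≠ e → ¬Disjoint f T := by
  obtain ⟨T₀, hT₀⟩ := exists_isCover_of_coverNumber_ne_zero hE
  obtain ⟨T, hT, hTcard⟩ :=
    exists_isCover_ncard_eq_coverNumber ⟨T₀, hT₀.mono (E' := E \ {e}) Set.sdiff_subset⟩
  have hlt : T.ncard < coverNumber E := hTcard ▸ hcrit _ (Set.sdiff_singleton_ssubset.mpr he)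
  refine ⟨T, hlt, ?_, fun f hf hfe => Set.not_disjoint_iff_nonempty_inter.mpr (hT f ⟨hf, hfe⟩)⟩
  by_contra hmeet
  have hcover : IsCover E T := fun f hf => by
    by_cases hfe : f = e
    · exact hfe ▸ Set.not_disjoint_iff_nonempty_inter.mp hmeet
    · exact hT f ⟨hf, hfe⟩
  exact (coverNumber_le_ncard hcover).not_gt hlt

end Cover

theorem stmt1_general (r t : ℕ) {V : Type*} [Fintype V]
    (E : Set (Set V)) (hunif : ∀ e ∈ E, e.ncard = r)
    (hcrit : ∀ E' ⊂ E, coverNumber E' < coverNumber E)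
    (hcov : coverNumber E = t + 1) :
    E.ncard ≤ (r + t).choose t := by
  classical
  choose! T hTcard hTdisj hTcross using fun e (he : e ∈ E) =>
    exists_small_cover_avoiding_of_critical hcrit (hcov ▸ t.succ_ne_zero) he
  rw [Set.ncard_eq_toFinset_card', ← Nat.choose_symm_add]
  refine bollobas_card_le_choose E.toFinset (fun e => e.toFinset) (fun e => (T e).toFinset)
    (fun e he => ?_) (fun e he => ?_) (fun e he => ?_) (fun e he f hf hef => ?_) <;>
    simp only [Set.mem_toFinset] at he
  · rw [← Set.ncard_eq_toFinset_card', hunif e he]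
  · have := hTcard e he
    rw [← Set.ncard_eq_toFinset_card']
    omega
  · exact Set.disjoint_toFinset.mpr (hTdisj e he)
  · rw [Set.mem_toFinset] at hf
    rw [Set.disjoint_toFinset]
    exact hTcross f hf e he hef

/-- a critical `r`-uniform hypergraph with cover number `t+1`
has at most `C(r+t, t)` edges. -/
theorem stmt1 (r t : ℕ) (hr : 2 ≤ r) {V : Type*} [Fintype V]
    (E : Set (Set V)) (hunif : ∀ e ∈ E, e.ncard = r)
    (hcrit : ∀ E' ⊂ E, coverNumber E' < coverNumber E)
    (hcov : coverNumber E = t + 1) :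
    E.ncard ≤ (r + t).choose t :=
  stmt1_general r t E hunif hcrit hcov
end

section
/- Let r ≥ 2 and ℓ ≥ 1 be integers. Then: (a) every r-uniform hypergraph satisfying the (ℓ+1,ℓ)-cover property has cover number at most r·ℓ; and (b) the complete r-uniform hypergraph on r·ℓ + r − 1 vertices (whose edges are all r-element subsets of the vertex set) satisfies the (ℓ+1,ℓ)-cover property and has cover number exactly r·ℓ. -/
variable {V : Type*}

lemma ncard_sUnion_le_mul {S : Set (Set V)} {r : ℕ} (hS : S.Finite) (h : ∀ e ∈ S, e.ncard ≤ r) :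
    (⋃₀ S).ncard ≤ r * S.ncard := by
  lift S to Finset (Set V) using hS
  rw [Set.sUnion_eq_biUnion, Set.ncard_coe_finset, mul_comm, ← smul_eq_mul]
  exact (S.set_ncard_biUnion_le id).trans (Finset.sum_le_card_nsmul _ _ _ h)

lemma mul_ncard_le_ncard_sUnion {S : Set (Set V)} {r : ℕ} (hS : S.Finite)
    (hfin : ∀ e ∈ S, e.Finite) (hd : S.PairwiseDisjoint id) (h : ∀ e ∈ S, r ≤ e.ncard) :
    r * S.ncard ≤ (⋃₀ S).ncard := by
  rw [Set.sUnion_eq_biUnion, hS.ncard_biUnion hfin hd]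
  lift S to Finset (Set V) using hS
  rw [finsum_mem_coe_finset, Set.ncard_coe_finset, mul_comm, ← smul_eq_mul]
  exact Finset.card_nsmul_le_sum _ _ _ h

section Cover

variable {E : Set (Set V)}

lemma coverNumber_le {T : Set V} (hT : IsCover E T) : coverNumber E ≤ T.ncard :=
  Nat.sInf_le ⟨T, rfl, hT⟩

lemma le_coverNumber {n : ℕ} (hE : ∃ T, IsCover E T) (h : ∀ T, IsCover E T → n ≤ T.ncard) :
    n ≤ coverNumber E := by
  obtain ⟨T, hT⟩ := hE
  exact le_csInf ⟨_, T, rfl, hT⟩ (by rintro _ ⟨T, rfl, hT⟩; exact h T hT)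

lemma isCover_univ (hE : ∀ e ∈ E, e.Nonempty) : IsCover E Set.univ := by
  simpa [IsCover] using hE

lemma exists_isCover_ncard_le (hE : E.Finite) (hne : ∀ e ∈ E, e.Nonempty) :
    ∃ T, T.ncard ≤ E.ncard ∧ IsCover E T := by
  choose g hg using hne
  have := hE.to_subtype
  refine ⟨Set.range fun e : E => g e e.2, Finite.card_range_le _, fun e he => ?_⟩
  exact ⟨g e he, hg e he, ⟨e, he⟩, rfl⟩

lemma exists_isCover_ncard_lt (hE : E.Finite) (hne : ∀ e ∈ E, e.Nonempty)
    (hd : ¬ E.PairwiseDisjoint id) : ∃ T, T.ncard < E.ncard ∧ IsCover E T := by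
  obtain ⟨e, he, f, hf, hef, hndisj⟩ : ∃ e ∈ E, ∃ f ∈ E, e ≠ f ∧ ¬ Disjoint e f := by
    simpa [Set.PairwiseDisjoint, Set.Pairwise, Function.onFun] using hd
  obtain ⟨v, hve, hvf⟩ := Set.not_disjoint_iff.mp hndisj
  obtain ⟨T, hT, hTcov⟩ := exists_isCover_ncard_le (E := E \ {e, f}) hE.sdiff
    fun g hg => hne g hg.1
  have hpair : ({e, f} : Set (Set V)) ⊆ E := Set.insert_subset he (Set.singleton_subset_iff.mpr hf)
  have hdiff := Set.ncard_sdiff hpair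
  have hpair_le := Set.ncard_le_ncard hpair hE
  rw [Set.ncard_pair hef] at hdiff hpair_le
  refine ⟨insert v T, by have := Set.ncard_insert_le v T; omega, fun g hg => ?_⟩
  by_cases hgef : g ∈ ({e, f} : Set (Set V))
  · rcases hgef with rfl | rfl
    exacts [⟨v, hve, Set.mem_insert _ _⟩, ⟨v, hvf, Set.mem_insert _ _⟩]
  · obtain ⟨w, hwg, hwT⟩ := hTcov g ⟨hg, hgef⟩
    exact ⟨w, hwg, Set.mem_insert_of_mem _ hwT⟩

lemma IsCover.ncard_le_of_pairwiseDisjoint {T : Set V} (hT : IsCover E T) (hTfin : T.Finite)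
    (hd : E.PairwiseDisjoint id) : E.ncard ≤ T.ncard := by
  choose g hg using hT
  have := hTfin.to_subtype
  rw [← Nat.card_coe_set_eq, ← Nat.card_coe_set_eq]
  refine Nat.card_le_card_of_injective (fun e : E => ⟨g e e.2, (hg e e.2).2⟩) fun e f hef => ?_
  by_contra hne
  refine Set.disjoint_left.mp (hd e.2 f.2 (Subtype.coe_ne_coe.mpr hne)) (hg e e.2).1 ?_
  rw [Subtype.mk.inj hef]
  exact (hg f f.2).1

lemma isCover_sUnion_of_maximal (hne : ∀ e ∈ E, e.Nonempty) {S : Set (Set V)}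
    (hS : Maximal (fun S => S ⊆ E ∧ S.PairwiseDisjoint id) S) : IsCover E (⋃₀ S) := by
  intro e he
  by_contra hempty
  have hdisj : ∀ t ∈ S, Disjoint e t := Set.disjoint_sUnion_right.mp
    (Set.disjoint_iff_inter_eq_empty.mpr (Set.not_nonempty_iff_eq_empty.mp hempty))
  have heS : e ∈ S := hS.mem_of_prop_insert
    ⟨Set.insert_subset he hS.prop.1, hS.prop.2.insert fun t ht _ => hdisj t ht⟩
  obtain ⟨v, hv⟩ := hne e he
  exact hempty ⟨v, hv, e, heS, hv⟩

end Cover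

section CoverProperty

variable [Finite V] {E : Set (Set V)} {ℓ : ℕ}

lemma CoverProperty.ncard_le_of_pairwiseDisjoint (hE : CoverProperty E (ℓ + 1) ℓ)
    {S : Set (Set V)} (hSE : S ⊆ E) (hd : S.PairwiseDisjoint id) : S.ncard ≤ ℓ := by
  by_contra! hlt
  obtain ⟨S', hS'S, hS'card⟩ := Set.exists_subset_card_eq (Nat.succ_le_of_lt hlt)
  obtain ⟨T, hTcard, hTcov⟩ := hE S' (hS'S.trans hSE) hS'card.le
  have := hTcov.ncard_le_of_pairwiseDisjoint (Set.toFinite T) (hd.subset hS'S)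
  omega

theorem coverNumber_le_mul_of_coverProperty {r : ℕ} (hne : ∀ e ∈ E, e.Nonempty)
    (hcard : ∀ e ∈ E, e.ncard ≤ r) (hE : CoverProperty E (ℓ + 1) ℓ) :
    coverNumber E ≤ r * ℓ := by
  obtain ⟨S, -, hS⟩ := Finite.exists_le_maximal
    (p := fun S : Set (Set V) => S ⊆ E ∧ S.PairwiseDisjoint id)
    (a := ∅) ⟨Set.empty_subset E, Set.pairwiseDisjoint_empty⟩
  calc coverNumber E ≤ (⋃₀ S).ncard := coverNumber_le (isCover_sUnion_of_maximal hne hS)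
    _ ≤ r * S.ncard := ncard_sUnion_le_mul (Set.toFinite S) fun e he => hcard e (hS.prop.1 he)
    _ ≤ r * ℓ := Nat.mul_le_mul_left r (hE.ncard_le_of_pairwiseDisjoint hS.prop.1 hS.prop.2)

end CoverProperty

section Complete

variable [Finite V] {r : ℕ}

lemma coverProperty_setOf_ncard_eq {ℓ : ℕ} (hV : Nat.card V < r * (ℓ + 1)) :
    CoverProperty {e : Set V | e.ncard = r} (ℓ + 1) ℓ := by
  intro S hS hScard
  have hr : r ≠ 0 := by rintro rfl; simp at hV
  have hne : ∀ e ∈ S, e.Nonempty := fun e he =>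
    Set.nonempty_of_ncard_ne_zero (by rw [show e.ncard = r from hS he]; exact hr)
  by_cases hd : S.PairwiseDisjoint id
  · have hunion : r * S.ncard < r * (ℓ + 1) := calc
      r * S.ncard ≤ (⋃₀ S).ncard := mul_ncard_le_ncard_sUnion (Set.toFinite S)
        (fun e _ => Set.toFinite e) hd fun e he => (hS he).ge
      _ ≤ Nat.card V := Set.ncard_le_card _
      _ < r * (ℓ + 1) := hV
    obtain ⟨T, hT, hTcov⟩ := exists_isCover_ncard_le (Set.toFinite S) hne
    exact ⟨T, hT.trans (Nat.lt_succ_iff.mp (Nat.lt_of_mul_lt_mul_left hunion)), hTcov⟩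
  · obtain ⟨T, hT, hTcov⟩ := exists_isCover_ncard_lt (Set.toFinite S) hne hd
    exact ⟨T, by omega, hTcov⟩

lemma IsCover.card_lt_ncard_add {T : Set V} (hT : IsCover {e : Set V | e.ncard = r} T) :
    Nat.card V < T.ncard + r := by
  by_contra! hle
  have hcompl : r ≤ Tᶜ.ncard := by
    have := Set.ncard_add_ncard_compl T
    omega
  obtain ⟨e, heT, hecard⟩ := Set.exists_subset_card_eq hcompl
  obtain ⟨w, hwe, hwT⟩ := hT e hecard
  exact heT hwe hwT

end Complete

theorem stmt8_general (r ℓ : ℕ) (hr : 2 ≤ r) :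
    (∀ (V : Type) [Fintype V] (E : Set (Set V)), (∀ e ∈ E, e.ncard = r) →
      CoverProperty E (ℓ + 1) ℓ → coverNumber E ≤ r * ℓ) ∧
    (CoverProperty {e : Set (Fin (r * ℓ + r - 1)) | e.ncard = r} (ℓ + 1) ℓ ∧
      coverNumber {e : Set (Fin (r * ℓ + r - 1)) | e.ncard = r} = r * ℓ) := by
  have hne : ∀ {V : Type} (e : Set V), e.ncard = r → e.Nonempty := fun e he =>
    Set.nonempty_of_ncard_ne_zero (by omega)
  have hupper : ∀ (V : Type) [Fintype V] (E : Set (Set V)), (∀ e ∈ E, e.ncard = r) →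
      CoverProperty E (ℓ + 1) ℓ → coverNumber E ≤ r * ℓ := fun V _ E hE =>
    coverNumber_le_mul_of_coverProperty (fun e he => hne e (hE e he)) fun e he => (hE e he).le
  have hcomplete : CoverProperty {e : Set (Fin (r * ℓ + r - 1)) | e.ncard = r} (ℓ + 1) ℓ :=
    coverProperty_setOf_ncard_eq (by rw [Nat.card_fin]; lia)
  refine ⟨hupper, hcomplete, le_antisymm (hupper _ _ (fun _ h => h) hcomplete) ?_⟩
  refine le_coverNumber ⟨_, isCover_univ fun e he => hne e he⟩ fun T hT => ?_
  have := hT.card_lt_ncard_add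
  rw [Nat.card_fin] at this
  omega

/-- (a) every `r`-uniform hypergraph with the `(ℓ+1,ℓ)`-cover property
has cover number at most `r·ℓ`; (b) the complete `r`-uniform hypergraph on
`r·ℓ + r - 1` vertices satisfies the `(ℓ+1,ℓ)`-cover property and has cover number
exactly `r·ℓ`. -/
theorem stmt8 (r ℓ : ℕ) (hr : 2 ≤ r) (hl : 1 ≤ ℓ) :
    (∀ (V : Type) [Fintype V] (E : Set (Set V)), (∀ e ∈ E, e.ncard = r) →
      CoverProperty E (ℓ + 1) ℓ → coverNumber E ≤ r * ℓ) ∧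
    (CoverProperty {e : Set (Fin (r * ℓ + r - 1)) | e.ncard = r} (ℓ + 1) ℓ ∧
      coverNumber {e : Set (Fin (r * ℓ + r - 1)) | e.ncard = r} = r * ℓ) :=
  stmt8_general r ℓ hr
end

section
/- Let r ≥ 2, ℓ ≥ 1 and t ≥ ℓ be integers, and let k be an integer with k < binomial(t+r, ℓ)/binomial(t, ℓ). Then there exists an r-uniform hypergraph satisfying the (k,ℓ)-cover property whose cover number is greater than t; in fact, the complete r-uniform hypergraph on t+r vertices has cover number t+1 and satisfies the (k,ℓ)-cover property. -/
/-!
A set `T` fails to cover the complete `r`-graph exactly when its complement contains an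
`r`-set, so on `t + r` vertices the covers are the sets of size at least `t + 1`.
For the cover property, an `ℓ`-set fails to cover a family `S` of edges only if it avoids
some edge of `S`; each edge of size at least `r` is avoided by at most `C(t, ℓ)` of the
`ℓ`-sets, so when `|S| · C(t, ℓ) < C(t + r, ℓ)` some `ℓ`-set covers all of `S`.
-/

open Finset

variable {V : Type*}

lemma isCover_iff_forall_not_subset_compl {E : Set (Set V)} {T : Set V} :
    IsCover E T ↔ ∀ e ∈ E, ¬e ⊆ Tᶜ := by
  simp only [IsCover, Set.subset_compl_iff_disjoint_right, Set.not_disjoint_iff_nonempty_inter]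

lemma isCover_setOf_ncard_eq_iff [Finite V] {r : ℕ} {T : Set V} :
    IsCover {e : Set V | e.ncard = r} T ↔ Tᶜ.ncard < r := by
  rw [isCover_iff_forall_not_subset_compl]
  constructor
  · intro hT
    by_contra! hr
    obtain ⟨e, he, rfl⟩ := Set.exists_subset_card_eq hr
    exact hT e rfl he
  · rintro hT e rfl he
    exact (Set.ncard_le_ncard he).not_gt hT

lemma coverNumber_setOf_ncard_eq [Fintype V] {r t : ℕ} (hr : 0 < r)
    (hV : Fintype.card V = t + r) :
    coverNumber {e : Set V | e.ncard = r} = t + 1 := by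
  have isCover_iff (T : Set V) : IsCover {e : Set V | e.ncard = r} T ↔ t + 1 ≤ T.ncard := by
    have := Set.ncard_add_ncard_compl T
    rw [isCover_setOf_ncard_eq_iff, Nat.card_eq_fintype_card, hV] at *
    omega
  obtain ⟨T, -, hT⟩ := Set.exists_subset_card_eq (s := (Set.univ : Set V)) (n := t + 1)
    (by rw [Set.ncard_univ, Nat.card_eq_fintype_card]; omega)
  refine IsLeast.csInf_eq ⟨⟨T, hT, (isCover_iff T).2 hT.ge⟩, ?_⟩
  rintro _ ⟨T, rfl, hT⟩
  exact (isCover_iff T).1 hT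

lemma card_powersetCard_compl_toFinset_le [Fintype V] [DecidableEq V] {r t : ℕ} (ℓ : ℕ)
    (hV : Fintype.card V = t + r) {e : Set V} [Fintype e] (he : r ≤ e.ncard) :
    #(powersetCard ℓ e.toFinsetᶜ) ≤ t.choose ℓ := by
  rw [card_powersetCard, card_compl, hV, ← Set.ncard_eq_toFinset_card']
  exact Nat.choose_le_choose ℓ (by omega)

lemma coverProperty_of_mul_choose_lt [Fintype V] {E : Set (Set V)} {r t k ℓ : ℕ}
    (hV : Fintype.card V = t + r) (hE : ∀ e ∈ E, r ≤ e.ncard)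
    (hk : k * t.choose ℓ < (t + r).choose ℓ) : CoverProperty E k ℓ := by
  classical
  intro S hSE hSk
  set avoiding := S.toFinset.biUnion fun e => powersetCard ℓ e.toFinsetᶜ
  have card_avoiding_lt : #avoiding < #(powersetCard ℓ (univ : Finset V)) := calc
    #avoiding ≤ ∑ e ∈ S.toFinset, #(powersetCard ℓ e.toFinsetᶜ) := card_biUnion_le
    _ ≤ ∑ _e ∈ S.toFinset, t.choose ℓ := sum_le_sum fun e he =>
      card_powersetCard_compl_toFinset_le ℓ hV (hE e (hSE (Set.mem_toFinset.1 he)))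
    _ = S.ncard * t.choose ℓ := by rw [sum_const, smul_eq_mul, Set.ncard_eq_toFinset_card']
    _ ≤ k * t.choose ℓ := Nat.mul_le_mul_right _ hSk
    _ < #(powersetCard ℓ (univ : Finset V)) := by rwa [card_powersetCard, card_univ, hV]
  obtain ⟨L, hL, hL_not_avoiding⟩ := exists_mem_notMem_of_card_lt_card card_avoiding_lt
  refine ⟨L, by rw [Set.ncard_coe_finset, (mem_powersetCard.1 hL).2], ?_⟩
  rw [isCover_iff_forall_not_subset_compl]
  intro e he hsub
  refine hL_not_avoiding (mem_biUnion.2 ⟨e, Set.mem_toFinset.2 he, ?_⟩)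
  refine mem_powersetCard.2 ⟨fun x hxL => mem_compl.2 fun hxe => ?_, (mem_powersetCard.1 hL).2⟩
  exact hsub (Set.mem_toFinset.1 hxe) hxL

theorem stmt9_general (r ℓ t k : ℕ) (hr : 2 ≤ r) (ht : ℓ ≤ t)
    (hk : (k : ℝ) < ((t + r).choose ℓ : ℝ) / ((t.choose ℓ : ℝ))) :
    (∃ (n : ℕ) (E : Set (Set (Fin n))), (∀ e ∈ E, e.ncard = r) ∧
        CoverProperty E k ℓ ∧ t < coverNumber E) ∧
    coverNumber {e : Set (Fin (t + r)) | e.ncard = r} = t + 1 ∧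
    CoverProperty {e : Set (Fin (t + r)) | e.ncard = r} k ℓ := by
  have hk' : k * t.choose ℓ < (t + r).choose ℓ := by
    have hpos : (0 : ℝ) < t.choose ℓ := by exact_mod_cast Nat.choose_pos ht
    exact_mod_cast (lt_div_iff₀ hpos).1 hk
  have hcover := coverNumber_setOf_ncard_eq (V := Fin (t + r)) (by omega) (Fintype.card_fin _)
  have hprop : CoverProperty {e : Set (Fin (t + r)) | e.ncard = r} k ℓ :=
    coverProperty_of_mul_choose_lt (Fintype.card_fin _) (fun _ he => he.ge) hk'
  exact ⟨⟨t + r, _, fun _ he => he, hprop, hcover ▸ t.lt_succ_self⟩, hcover, hprop⟩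

/-- for `t ≥ ℓ` and `k < C(t+r, ℓ)/C(t, ℓ)`, there is an `r`-uniform
hypergraph with the `(k,ℓ)`-cover property and cover number greater than `t`; in
fact, the complete `r`-uniform hypergraph on `t+r` vertices has cover number `t+1`
and satisfies the `(k,ℓ)`-cover property. -/
theorem stmt9 (r ℓ t k : ℕ) (hr : 2 ≤ r) (hl : 1 ≤ ℓ) (ht : ℓ ≤ t)
    (hk : (k : ℝ) < ((t + r).choose ℓ : ℝ) / ((t.choose ℓ : ℝ))) :
    (∃ (n : ℕ) (E : Set (Set (Fin n))), (∀ e ∈ E, e.ncard = r) ∧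
        CoverProperty E k ℓ ∧ t < coverNumber E) ∧
    coverNumber {e : Set (Fin (t + r)) | e.ncard = r} = t + 1 ∧
    CoverProperty {e : Set (Fin (t + r)) | e.ncard = r} k ℓ :=
  stmt9_general r ℓ t k hr ht hk
end

section
/- Let k and r be integers with e^(r/2) > k > r ≥ 2. Then there exists an r-uniform hypergraph satisfying the (k,r)-cover property whose cover number is at least r²/(4·log k), where log denotes the natural logarithm. -/
/-!
Take the complete `r`-graph on `n = ⌈B⌉ + r - 1` vertices, `B = r² / (4 log k)`. A set of at
most `n - r` vertices misses some edge, so its cover number is `⌈B⌉ ≥ B`. Given at most `k`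
edges, double counting yields a vertex lying in at least an `r/n` fraction of them; choosing
such vertices greedily `r` times leaves at most `k (1 - r/n)^r ≤ k e^{-r²/n}` edges uncovered,
which is `< 1` because `n log k < B log k + r log k < r²/4 + r²/2`.
-/

section Greedy

open Finset
open scoped Classical

variable {α : Type*} [Fintype α] {r : ℕ}

lemma sum_card_filter_mem_eq_sum_ncard (U : Finset (Set α)) :
    ∑ v, #{e ∈ U | v ∈ e} = ∑ e ∈ U, e.ncard := by
  simp only [card_filter]
  rw [sum_comm]
  refine sum_congr rfl fun e _ => ?_
  rw [sum_boole, Nat.cast_id, Set.ncard_eq_toFinset_card']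
  congr 1
  ext
  simp

lemma exists_card_mul_card_filter_notMem_le [Nonempty α] (U : Finset (Set α))
    (hU : ∀ e ∈ U, e.ncard = r) :
    ∃ v, Fintype.card α * #{e ∈ U | v ∉ e} ≤ (Fintype.card α - r) * #U := by
  have hsum : ∑ _v : α, r * #U = ∑ v, Fintype.card α * #{e ∈ U | v ∈ e} := by
    rw [← mul_sum univ (fun v => #{e ∈ U | v ∈ e}), sum_card_filter_mem_eq_sum_ncard,
      sum_congr rfl hU]
    simp only [sum_const, card_univ, smul_eq_mul]
    ring
  obtain ⟨v, -, hv⟩ := exists_le_of_sum_le univ_nonempty hsum.le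
  refine ⟨v, ?_⟩
  have hsplit := card_filter_add_card_filter_not (s := U) (p := fun e => v ∈ e)
  rw [← hsplit] at hv ⊢
  rw [Nat.sub_mul, mul_add]
  omega

lemma exists_ncard_le_card_filter_disjoint_le [Nonempty α] (U : Finset (Set α))
    (hU : ∀ e ∈ U, e.ncard = r) (j : ℕ) :
    ∃ T : Set α, T.ncard ≤ j ∧
      Fintype.card α ^ j * #{e ∈ U | Disjoint e T} ≤ (Fintype.card α - r) ^ j * #U := by
  induction j with
  | zero => exact ⟨∅, by simp, by simp⟩
  | succ j ih =>
    obtain ⟨T, hT, hTU⟩ := ih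
    obtain ⟨v, hv⟩ := exists_card_mul_card_filter_notMem_le {e ∈ U | Disjoint e T}
      fun e he => hU e (mem_filter.1 he).1
    refine ⟨insert v T, (Set.ncard_insert_le v T).trans (by omega), ?_⟩
    have hfilter : {e ∈ U | Disjoint e (insert v T)} = {e ∈ {e ∈ U | Disjoint e T} | v ∉ e} := by
      rw [filter_filter]
      exact filter_congr fun e _ => by rw [Set.disjoint_insert_right, and_comm]
    rw [hfilter]
    calc Fintype.card α ^ (j + 1) * #{e ∈ {e ∈ U | Disjoint e T} | v ∉ e}
        ≤ Fintype.card α ^ j * ((Fintype.card α - r) * #{e ∈ U | Disjoint e T}) := by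
          rw [pow_succ, mul_assoc]; exact Nat.mul_le_mul_left _ hv
      _ ≤ (Fintype.card α - r) ^ (j + 1) * #U := by
          rw [mul_left_comm, pow_succ', mul_assoc]; exact Nat.mul_le_mul_left _ hTU

lemma coverProperty_of_mul_pow_lt [Nonempty α] {E : Set (Set α)} {k j : ℕ}
    (hE : ∀ e ∈ E, e.ncard = r)
    (h : k * (Fintype.card α - r) ^ j < Fintype.card α ^ j) : CoverProperty E k j := by
  intro S hSE hSk
  obtain ⟨T, hTj, hT⟩ := exists_ncard_le_card_filter_disjoint_le S.toFinset
    (fun e he => hE e (hSE (Set.mem_toFinset.1 he))) j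
  have hU : #S.toFinset ≤ k := by rwa [← Set.ncard_eq_toFinset_card']
  have huncovered : {e ∈ S.toFinset | Disjoint e T} = ∅ := by
    rw [← card_eq_zero, ← Nat.lt_one_iff]
    refine lt_of_mul_lt_mul_left (a := Fintype.card α ^ j) ?_ (Nat.zero_le _)
    calc Fintype.card α ^ j * _ ≤ (Fintype.card α - r) ^ j * #S.toFinset := hT
      _ ≤ k * (Fintype.card α - r) ^ j := by rw [mul_comm]; exact Nat.mul_le_mul_right _ hU
      _ < Fintype.card α ^ j * 1 := by rwa [mul_one]
  refine ⟨T, hTj, fun e he => Set.not_disjoint_iff_nonempty_inter.1 fun hdisj => ?_⟩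
  have : e ∈ {e ∈ S.toFinset | Disjoint e T} := by simp [he, hdisj]
  simp [huncovered] at this

end Greedy

lemma mul_sub_pow_lt_pow_of_mul_log_lt {n r k : ℕ} (hrn : r ≤ n) (hk : 0 < k)
    (h : n * Real.log k < r ^ 2) : k * (n - r) ^ r < n ^ r := by
  have hn : 0 < n := Nat.pos_of_ne_zero (by rintro rfl; simp [Nat.le_zero.1 hrn] at h)
  have hn' : (0 : ℝ) < n := by exact_mod_cast hn
  have hk_lt : (k : ℝ) < Real.exp (r ^ 2 / n) := by
    rw [← Real.exp_log (by exact_mod_cast hk : (0 : ℝ) < k)]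
    exact Real.exp_lt_exp.2 ((lt_div_iff₀ hn').2 (by linarith))
  have hpow : ((n : ℝ) - r) ^ r ≤ n ^ r * Real.exp (-(r ^ 2 / n)) :=
    calc ((n : ℝ) - r) ^ r = n ^ r * (1 - r / n) ^ r := by
          rw [← mul_pow]; congr 1; field_simp
      _ ≤ n ^ r * Real.exp (-(r / n)) ^ r := by
          have : (r : ℝ) / n ≤ 1 := (div_le_one hn').2 (by exact_mod_cast hrn)
          gcongr
          exact Real.one_sub_le_exp_neg _
      _ = n ^ r * Real.exp (-(r ^ 2 / n)) := by
          rw [← Real.exp_nat_mul]; ring_nf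
  have : (k : ℝ) * ((n : ℝ) - r) ^ r < n ^ r :=
    calc (k : ℝ) * ((n : ℝ) - r) ^ r ≤ k * (n ^ r * Real.exp (-(r ^ 2 / n))) := by gcongr
      _ < Real.exp (r ^ 2 / n) * (n ^ r * Real.exp (-(r ^ 2 / n))) := by gcongr
      _ = n ^ r := by rw [mul_left_comm, ← Real.exp_add, add_neg_cancel, Real.exp_zero, mul_one]
  rw [← Nat.cast_sub hrn] at this
  exact_mod_cast this

lemma sub_add_one_le_coverNumber_setOf_ncard_eq {α : Type*} [Finite α] {r : ℕ} (hr : 0 < r)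
    (hrn : r ≤ Nat.card α) : Nat.card α - r + 1 ≤ coverNumber {e : Set α | e.ncard = r} := by
  have huniv : IsCover {e : Set α | e.ncard = r} Set.univ := fun e he => by
    rw [Set.inter_univ]
    exact Set.nonempty_of_ncard_ne_zero (by rw [he]; omega)
  refine le_csInf ⟨_, Set.univ, rfl, huniv⟩ ?_
  rintro m ⟨T, rfl, hT⟩
  by_contra! hsmall
  have hcompl : r ≤ Tᶜ.ncard := by have := Set.ncard_add_ncard_compl T; omega
  obtain ⟨e, heT, he⟩ := Set.exists_subset_card_eq hcompl
  obtain ⟨x, hxe, hxT⟩ := hT e he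
  exact heT hxe hxT

/-- for `e^(r/2) > k > r ≥ 2`, there is an `r`-uniform hypergraph with
the `(k,r)`-cover property whose cover number is at least `r²/(4·log k)`. -/
theorem stmt11 (r k : ℕ) (hr : 2 ≤ r) (hk : r < k)
    (hke : (k : ℝ) < Real.exp ((r : ℝ) / 2)) :
    ∃ (n : ℕ) (E : Set (Set (Fin n))), (∀ e ∈ E, e.ncard = r) ∧
      CoverProperty E k r ∧
      ((r : ℝ) ^ 2 / (4 * Real.log k) ≤ (coverNumber E : ℝ)) := by
  have hlog_pos : 0 < Real.log k := Real.log_pos (by exact_mod_cast (by omega : 1 < k))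
  have hlog_lt : Real.log k < r / 2 :=
    (Real.log_lt_iff_lt_exp (by exact_mod_cast (by omega : 0 < k))).2 hke
  set B : ℝ := r ^ 2 / (4 * Real.log k) with hB_def
  have hB : 0 < ⌈B⌉₊ := Nat.ceil_pos.2 (by positivity)
  set n := ⌈B⌉₊ + (r - 1)
  have hn_lt : (n : ℝ) < B + r := by
    have := Nat.ceil_lt_add_one (by positivity : 0 ≤ B)
    push_cast [n, Nat.cast_sub (by omega : 1 ≤ r)]
    linarith
  have hB_log : B * Real.log k = r ^ 2 / 4 := by rw [hB_def]; field_simp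
  have hn_log : n * Real.log k < r ^ 2 :=
    calc n * Real.log k < (B + r) * Real.log k := by gcongr
      _ = r ^ 2 / 4 + r * Real.log k := by rw [add_mul, hB_log]
      _ ≤ r ^ 2 := by nlinarith
  have : Nonempty (Fin n) := ⟨⟨0, by omega⟩⟩
  refine ⟨n, {e | e.ncard = r}, fun _ he => he, coverProperty_of_mul_pow_lt (fun _ he => he) ?_, ?_⟩
  · rw [Fintype.card_fin]
    exact mul_sub_pow_lt_pow_of_mul_log_lt (by omega) (by omega) hn_log
  · have hcover := sub_add_one_le_coverNumber_setOf_ncard_eq (α := Fin n) (r := r) (by omega)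
      (by rw [Nat.card_fin]; omega)
    rw [Nat.card_fin] at hcover
    calc B ≤ ⌈B⌉₊ := Nat.le_ceil B
      _ ≤ coverNumber {e : Set (Fin n) | e.ncard = r} := by
          exact_mod_cast (by omega : ⌈B⌉₊ ≤ coverNumber {e : Set (Fin n) | e.ncard = r})
end

section
/- Let r ≥ 2, ℓ ≥ 1 and k > ℓ be integers. Then there exists an r-uniform hypergraph satisfying the (k,ℓ)-cover property whose cover number is at least r·ℓ²/(6k). -/
/-!
Let `H` be the disjoint union of `b` copies of the complete `r`-graph on `r + s` vertices.
A cover misses at most `r - 1` vertices of each copy, so `τ(H) = b (s + 1)`.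
If `d s < r + s`, the complements of any `d` edges of one copy cannot exhaust it, so these
edges share a vertex; hence any `k` edges of `H` are covered by `b + ⌊k/d⌋` vertices.
Taking `d ≈ 2k/ℓ`, `s ≈ r/d` and `b = ⌈ℓ/2⌉` gives `b + ⌊k/d⌋ ≤ ℓ` and `b (s + 1) ≥ r ℓ² / (4k)`.
-/

open Set Function

section CommonVertex

variable {V : Type*} [Finite V] {B : Set V} {s d : ℕ}

theorem exists_mem_forall_mem_of_ncard_sdiff_le {S : Set (Set V)}
    (hS : ∀ e ∈ S, (B \ e).ncard ≤ s) (hSd : S.ncard ≤ d) (hB : d * s < B.ncard) :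
    ∃ v ∈ B, ∀ e ∈ S, v ∈ e := by
  by_contra! h
  have hS_fin : S.Finite := toFinite S
  have hB_sub : B ⊆ ⋃ e ∈ hS_fin.toFinset, B \ e := fun v hv => by
    obtain ⟨e, he, hve⟩ := h v hv
    exact mem_biUnion (hS_fin.mem_toFinset.2 he) ⟨hv, hve⟩
  have : B.ncard ≤ d * s :=
    calc B.ncard ≤ (⋃ e ∈ hS_fin.toFinset, B \ e).ncard := ncard_le_ncard hB_sub
      _ ≤ ∑ e ∈ hS_fin.toFinset, (B \ e).ncard := Finset.set_ncard_biUnion_le _ _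
      _ ≤ hS_fin.toFinset.card * s :=
        Finset.sum_le_card_nsmul _ _ _ fun e he => hS e (hS_fin.mem_toFinset.1 he)
      _ ≤ d * s := by
        rw [← ncard_eq_toFinset_card S hS_fin]
        exact Nat.mul_le_mul_right s hSd
  omega

/-- Repeatedly cover `d` of the remaining sets by one common vertex. -/
theorem exists_isCover_ncard_le_div_add_one (hd : 0 < d) (hB : d * s < B.ncard) :
    ∀ {S : Set (Set V)}, (∀ e ∈ S, (B \ e).ncard ≤ s) →
      ∃ T : Set V, T.ncard ≤ S.ncard / d + 1 ∧ IsCover S T := by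
  intro S hS
  induction h : S.ncard using Nat.strong_induction_on generalizing S with
  | _ n ih =>
  subst h
  by_cases hSd : S.ncard ≤ d
  · obtain ⟨v, -, hv⟩ := exists_mem_forall_mem_of_ncard_sdiff_le hS hSd hB
    exact ⟨{v}, by simp, fun e he => ⟨v, hv e he, rfl⟩⟩
  obtain ⟨S₀, hS₀S, hS₀d⟩ := exists_subset_card_eq (s := S) (n := d) (by omega)
  obtain ⟨v, -, hv⟩ :=
    exists_mem_forall_mem_of_ncard_sdiff_le (fun e he => hS e (hS₀S he)) hS₀d.le hB
  have hrest : (S \ S₀).ncard = S.ncard - d := by rw [ncard_sdiff hS₀S, hS₀d]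
  obtain ⟨T, hT, hTS⟩ := ih _ (by omega) (S := S \ S₀) (fun e he => hS e he.1) hrest
  refine ⟨insert v T, ?_, fun e he => ?_⟩
  · have hdiv : S.ncard / d = (S.ncard - d) / d + 1 := by
      rw [← Nat.add_div_right _ hd, Nat.sub_add_cancel (by omega)]
    have hins := ncard_insert_le v T
    omega
  · by_cases he₀ : e ∈ S₀
    · exact ⟨v, hv e he₀, mem_insert v T⟩
    · obtain ⟨x, hxe, hxT⟩ := hTS e ⟨he, he₀⟩
      exact ⟨x, hxe, mem_insert_of_mem v hxT⟩

end CommonVertex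

theorem sum_ncard_le_ncard_of_pairwise_disjoint {α ι : Type*} [Finite α] [Fintype ι]
    {t : ι → Set α} {A : Set α} (ht : Pairwise (Disjoint on t)) (htA : ∀ i, t i ⊆ A) :
    ∑ i, (t i).ncard ≤ A.ncard := by
  rw [← finsum_eq_sum_of_fintype, ← ncard_iUnion_of_finite (fun i => toFinite _) ht]
  exact ncard_le_ncard (iUnion_subset htA)

/-- The disjoint union of the complete `r`-graphs on the fibres of `π`. -/
def fiberComplete {V ι : Type*} (π : V → ι) (r : ℕ) : Set (Set V) :=
  {e | e.ncard = r ∧ ∃ i, e ⊆ π ⁻¹' {i}}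

section FiberComplete

variable {V ι : Type*} [Finite V] {π : V → ι} {r s : ℕ}

theorem IsCover.lt_ncard_inter_fiber {T : Set V} (hT : IsCover (fiberComplete π r) T) {i : ι}
    (hπ : (π ⁻¹' {i}).ncard = r + s) : s < (π ⁻¹' {i} ∩ T).ncard := by
  by_contra! h
  have hsplit := ncard_inter_add_ncard_sdiff_eq_ncard (π ⁻¹' {i}) T
  obtain ⟨e, heT, he⟩ := exists_subset_card_eq (s := π ⁻¹' {i} \ T) (n := r) (by omega)
  obtain ⟨v, hve, hvT⟩ := hT e ⟨he, i, heT.trans sdiff_subset⟩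
  exact (heT hve).2 hvT

variable [Fintype ι]

theorem fiberComplete_coverProperty (hπ : ∀ i, (π ⁻¹' {i}).ncard = r + s) {d k ℓ : ℕ}
    (hd : 0 < d) (hds : d * s < r + s) (hℓ : Fintype.card ι + k / d ≤ ℓ) :
    CoverProperty (fiberComplete π r) k ℓ := by
  intro S hSE hSk
  have hr : 0 < r := by nlinarith
  have hS_part : ∀ i, ∀ e ∈ S ∩ {e | e ⊆ π ⁻¹' {i}}, (π ⁻¹' {i} \ e).ncard ≤ s := by
    rintro i e ⟨heS, hei⟩
    rw [ncard_sdiff hei, hπ, (hSE heS).1]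
    omega
  choose T hT using fun i => exists_isCover_ncard_le_div_add_one hd (by rw [hπ i]; exact hds)
    (hS_part i)
  have hS_sum : ∑ i, (S ∩ {e | e ⊆ π ⁻¹' {i}}).ncard ≤ S.ncard := by
    refine sum_ncard_le_ncard_of_pairwise_disjoint (fun i j hij => ?_)
      fun i => inter_subset_left
    refine disjoint_left.2 fun e hei hej => ?_
    obtain ⟨v, hv⟩ := nonempty_of_ncard_ne_zero (s := e) (by rw [(hSE hei.1).1]; omega)
    exact hij ((hei.2 hv).symm.trans (hej.2 hv))
  refine ⟨⋃ i, T i, ?_, fun e he => ?_⟩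
  · calc (⋃ i, T i).ncard ≤ ∑ i, (T i).ncard := ncard_iUnion_le_of_fintype T
      _ ≤ ∑ i, ((S ∩ {e | e ⊆ π ⁻¹' {i}}).ncard / d + 1) :=
        Finset.sum_le_sum fun i _ => (hT i).1
      _ ≤ S.ncard / d + Fintype.card ι := by
        rw [Finset.sum_add_distrib, Finset.sum_const, smul_eq_mul, mul_one, Finset.card_univ]
        gcongr
        refine ((Nat.le_div_iff_mul_le hd).2 ?_).trans (Nat.div_le_div_right hS_sum)
        rw [Finset.sum_mul]
        exact Finset.sum_le_sum fun i _ => Nat.div_mul_le_self _ _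
      _ ≤ ℓ := by have := Nat.div_le_div_right (c := d) hSk; omega
  · obtain ⟨i, hei⟩ := (hSE he).2
    obtain ⟨v, hve, hvT⟩ := (hT i).2 e ⟨he, hei⟩
    exact ⟨v, hve, mem_iUnion_of_mem i hvT⟩

theorem le_coverNumber_fiberComplete (hr : 0 < r) (hπ : ∀ i, (π ⁻¹' {i}).ncard = r + s) :
    Fintype.card ι * (s + 1) ≤ coverNumber (fiberComplete π r) := by
  refine le_csInf ⟨_, univ, rfl, fun e he => ?_⟩ ?_
  · rw [inter_univ]
    exact nonempty_of_ncard_ne_zero (by rw [he.1]; omega)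
  rintro _ ⟨T, rfl, hT⟩
  calc Fintype.card ι * (s + 1) = ∑ _i : ι, (s + 1) := by simp
    _ ≤ ∑ i, (π ⁻¹' {i} ∩ T).ncard :=
      Finset.sum_le_sum fun i _ => hT.lt_ncard_inter_fiber (hπ i)
    _ ≤ T.ncard := by
      refine sum_ncard_le_ncard_of_pairwise_disjoint (fun i j hij => ?_)
        fun i => inter_subset_right
      exact ((disjoint_singleton.2 hij).preimage π).mono inter_subset_left inter_subset_left

end FiberComplete

theorem ncard_preimage_fst_finProdFinEquiv_symm {b c : ℕ} (i : Fin b) :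
    ((fun v => (finProdFinEquiv.symm v).1) ⁻¹' {i} : Set (Fin (b * c))).ncard = c := by
  have : ((fun v => (finProdFinEquiv.symm v).1) ⁻¹' {i} : Set (Fin (b * c)))
      = finProdFinEquiv '' ({i} ×ˢ univ) := by
    ext v
    simp [Equiv.image_eq_preimage_symm]
  rw [this, ncard_image_of_injective _ finProdFinEquiv.injective, ncard_prod]
  simp

theorem exists_fiberComplete_parameters {r ℓ k : ℕ} (hr : 1 ≤ r) (hℓ : 1 ≤ ℓ) (hk : ℓ < k) :
    ∃ b s d : ℕ, 0 < d ∧ d * s < r + s ∧ b + k / d ≤ ℓ ∧ r * ℓ ^ 2 ≤ 4 * k * (b * (s + 1)) := by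
  obtain ⟨r, rfl⟩ : ∃ r', r = r' + 1 := ⟨r - 1, by omega⟩
  set d := 2 * k / ℓ
  have hd : 0 < d := Nat.div_pos (by omega) hℓ
  have hdℓ : d * ℓ ≤ 2 * k := Nat.div_mul_le_self _ _
  have hdℓ' : 2 * k < d * ℓ + ℓ := Nat.lt_div_mul_add hℓ
  set s := r / d
  have hsd : s * d ≤ r := Nat.div_mul_le_self _ _
  have hsd' : r < s * d + d := Nat.lt_div_mul_add hd
  refine ⟨ℓ - ℓ / 2, s, d + 1, d.succ_pos, by linarith, ?_, ?_⟩
  · have : k / (d + 1) * 2 < ℓ := by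
      refine Nat.lt_of_mul_lt_mul_right (a := d + 1) ?_
      nlinarith [Nat.div_mul_le_self k (d + 1)]
    omega
  · have hrs : r + 1 ≤ (s + 1) * d := by linarith
    calc (r + 1) * ℓ ^ 2 ≤ (s + 1) * d * ℓ ^ 2 := Nat.mul_le_mul_right _ hrs
      _ = (s + 1) * (d * ℓ) * ℓ := by ring
      _ ≤ (s + 1) * (2 * k) * (2 * (ℓ - ℓ / 2)) := by gcongr; omega
      _ = 4 * k * ((ℓ - ℓ / 2) * (s + 1)) := by ring

/-- for `k > ℓ`, there is an `r`-uniform hypergraph with the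
`(k,ℓ)`-cover property whose cover number is at least `r·ℓ²/(6k)`. -/
theorem stmt12 (r ℓ k : ℕ) (hr : 2 ≤ r) (hl : 1 ≤ ℓ) (hk : ℓ < k) :
    ∃ (n : ℕ) (E : Set (Set (Fin n))), (∀ e ∈ E, e.ncard = r) ∧
      CoverProperty E k ℓ ∧
      ((r : ℝ) * (ℓ : ℝ) ^ 2 / (6 * (k : ℝ)) ≤ (coverNumber E : ℝ)) := by
  obtain ⟨b, s, d, hd, hds, hℓ, hbound⟩ :=
    exists_fiberComplete_parameters (r := r) (by omega) hl hk
  set π : Fin (b * (r + s)) → Fin b := fun v => (finProdFinEquiv.symm v).1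
  have hπ : ∀ i, (π ⁻¹' {i}).ncard = r + s := ncard_preimage_fst_finProdFinEquiv_symm
  refine ⟨_, fiberComplete π r, fun e he => he.1,
    fiberComplete_coverProperty hπ hd hds (by rwa [Fintype.card_fin]), ?_⟩
  have hτ := le_coverNumber_fiberComplete (by omega) hπ
  rw [Fintype.card_fin] at hτ
  have hnat : r * ℓ ^ 2 ≤ coverNumber (fiberComplete π r) * (6 * k) := by nlinarith
  have hk0 : (0 : ℝ) < k := by exact_mod_cast Nat.zero_lt_of_lt hk
  rw [div_le_iff₀ (by positivity)]
  exact_mod_cast hnat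
end

section
/- Let r ≥ 2 be an integer and let k be an integer with k < binomial(r, ⌊(r+1)/2⌋) + binomial(r, ⌈(r+1)/2⌉). Then there exists an r-partite r-graph satisfying the (r,k)-cover property whose cover number is greater than r. -/
theorem Nat.add_one_le_choose_add {n m : ℕ} (hm : 1 ≤ m) : n + 1 ≤ n.choose m + m := by
  rcases le_or_gt m n with hmn | hmn
  · have : n - m + 1 ≤ n.choose m := by
      rw [← Nat.choose_symm hmn, ← Nat.choose_succ_self_right]
      exact Nat.choose_le_choose _ (by omega)
    omega
  · omega

theorem Nat.choose_div_two_eq (r : ℕ) : r.choose (r / 2) = r.choose ((r + 1) / 2) := by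
  rcases Nat.even_or_odd r with ⟨t, rfl⟩ | ⟨t, rfl⟩
  · congr 1; omega
  · exact Nat.choose_symm_of_eq_add (by omega)

theorem Nat.choose_succ_div_two (r : ℕ) :
    (r + 1).choose ((r + 2) / 2) = r.choose ((r + 1) / 2) + r.choose ((r + 2) / 2) := by
  rw [show (r + 2) / 2 = r / 2 + 1 by omega, Nat.choose_succ_succ', Nat.choose_div_two_eq]

theorem Set.ncard_range_inter_fst_preimage {ι β : Type*} {f : ι → ι × β}
    (hf : ∀ i, (f i).1 = i) (i : ι) : (Set.range f ∩ Prod.fst ⁻¹' {i}).ncard = 1 := by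
  rw [Set.ncard_eq_one]
  refine ⟨f i, Set.ext fun v => ⟨?_, ?_⟩⟩
  · rintro ⟨⟨j, rfl⟩, hj⟩
    simp only [Set.mem_preimage, Set.mem_singleton_iff, hf] at hj
    rw [hj]; rfl
  · rintro rfl
    exact ⟨⟨i, rfl⟩, hf i⟩

theorem lt_coverNumber {V : Type*} {E : Set (Set V)} {m : ℕ} (hE : ∀ s ∈ E, s.Nonempty)
    (h : ∀ T, IsCover E T → m < T.ncard) : m < coverNumber E := by
  have hne : {n | ∃ T : Set V, T.ncard = n ∧ IsCover E T}.Nonempty :=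
    ⟨_, Set.univ, rfl, fun s hs => by simpa using hE s hs⟩
  obtain ⟨T, hT, hcov⟩ := Nat.sInf_mem hne
  unfold coverNumber
  exact hT ▸ h T hcov

section Transport

variable {V W : Type*} (e : V ≃ W)

theorem isCover_image_equiv_iff {E : Set (Set V)} {T : Set V} :
    IsCover (Set.image e '' E) (e '' T) ↔ IsCover E T := by
  simp only [IsCover, Set.forall_mem_image, ← Set.image_inter e.injective, Set.image_nonempty]

theorem coverNumber_image_equiv (E : Set (Set V)) :
    coverNumber (Set.image e '' E) = coverNumber E := by
  unfold coverNumber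
  congr 1
  ext n
  constructor
  · rintro ⟨T, rfl, hT⟩
    refine ⟨e.symm '' T, Set.ncard_image_of_injective _ e.symm.injective, ?_⟩
    rwa [← isCover_image_equiv_iff e, e.image_symm_image]
  · rintro ⟨T, rfl, hT⟩
    exact ⟨e '' T, Set.ncard_image_of_injective _ e.injective, (isCover_image_equiv_iff e).2 hT⟩

theorem ncard_image_equiv_inter_preimage {r : ℕ} (part : V → Fin r) (s : Set V) (i : Fin r) :
    (e '' s ∩ (part ∘ e.symm) ⁻¹' {i}).ncard = (s ∩ part ⁻¹' {i}).ncard := by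
  rw [Set.preimage_comp, ← e.image_eq_preimage_symm, ← Set.image_inter e.injective,
    Set.ncard_image_of_injective _ e.injective]

variable {r : ℕ} {part : V → Fin r} {E : Set (Set V)}

theorem IsPartite.image_equiv (hE : IsPartite r part E) :
    IsPartite r (part ∘ e.symm) (Set.image e '' E) := by
  rintro _ ⟨s, hs, rfl⟩ i
  rw [ncard_image_equiv_inter_preimage, hE s hs i]

theorem IsTransversalCover.image_equiv {T : Set V} (hT : IsTransversalCover r part E T) :
    IsTransversalCover r (part ∘ e.symm) (Set.image e '' E) (e '' T) :=
  ⟨(isCover_image_equiv_iff e).2 hT.1, fun i => by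
    rw [ncard_image_equiv_inter_preimage, hT.2 i]⟩

theorem PartiteCoverProperty.image_equiv {k : ℕ} (hE : PartiteCoverProperty r part E k) :
    PartiteCoverProperty r (part ∘ e.symm) (Set.image e '' E) k := by
  intro S' hS' hk
  obtain ⟨S, hSE, rfl⟩ := Set.subset_image_iff.1 hS'
  rw [Set.ncard_image_of_injective _ (Set.image_injective.2 e.injective)] at hk
  obtain ⟨T, hT⟩ := hE S hSE hk
  exact ⟨e '' T, hT.image_equiv e⟩

end Transport

namespace HubHypergraph

open Finset

abbrev Vertex (r : ℕ) := Fin r × (Bool ⊕ Finset (Option (Fin r)))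

variable {r : ℕ}

def vertex (A : Finset (Option (Fin r))) (i : Fin r) : Vertex r :=
  if (some i ∈ A ↔ none ∈ A) then (i, .inr A) else (i, .inl (decide (some i ∈ A)))

def edge (A : Finset (Option (Fin r))) : Set (Vertex r) := Set.range (vertex A)

def edges (r h : ℕ) : Set (Set (Vertex r)) :=
  edge '' ↑(powersetCard h (univ : Finset (Option (Fin r))))

def transversal (A : Finset (Option (Fin r))) : Set (Vertex r) :=
  Set.range fun i => (i, .inl (decide (some i ∉ A)))

@[simp]
theorem vertex_fst (A : Finset (Option (Fin r))) (i : Fin r) : (vertex A i).1 = i := by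
  unfold vertex; split_ifs <;> rfl

theorem vertex_snd_eq_inl {A : Finset (Option (Fin r))} {i : Fin r} {b : Bool}
    (h : (vertex A i).2 = .inl b) : (some i ∈ A ↔ b = true) ∧ (none ∈ A ↔ b = false) := by
  unfold vertex at h
  split_ifs at h with hA
  simp only [Sum.inl.injEq] at h
  subst h
  by_cases hi : some i ∈ A <;> simp_all

theorem vertex_snd_eq_inr {A B : Finset (Option (Fin r))} {i : Fin r}
    (h : (vertex A i).2 = .inr B) : A = B := by
  unfold vertex at h
  split_ifs at h
  simpa using h

theorem vertex_injective (hr : 0 < r) : Function.Injective (vertex (r := r)) := by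
  intro A B hAB
  by_contra hne
  have hmem : ∀ i : Fin r, (some i ∈ A ↔ some i ∈ B) ∧ (none ∈ A ↔ none ∈ B) := by
    intro i
    have hi := congrFun hAB i
    rcases hv : (vertex A i).2 with b | C
    · obtain ⟨hA₁, hA₂⟩ := vertex_snd_eq_inl hv
      obtain ⟨hB₁, hB₂⟩ := vertex_snd_eq_inl (hi ▸ hv)
      exact ⟨hA₁.trans hB₁.symm, hA₂.trans hB₂.symm⟩
    · exact absurd ((vertex_snd_eq_inr hv).trans (vertex_snd_eq_inr (hi ▸ hv)).symm) hne
  refine hne (Finset.ext fun x => ?_)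
  cases x with
  | none => exact (hmem ⟨0, hr⟩).2
  | some i => exact (hmem i).1

theorem edge_injective (hr : 0 < r) : Function.Injective (edge (r := r)) := by
  refine fun A B hAB => vertex_injective hr (funext fun i => ?_)
  obtain ⟨j, hj⟩ : vertex A i ∈ edge B := hAB ▸ Set.mem_range_self i
  obtain rfl : j = i := by simpa using congrArg Prod.fst hj
  exact hj.symm

theorem ncard_edges (hr : 0 < r) (h : ℕ) : (edges r h).ncard = (r + 1).choose h := by
  rw [edges, Set.ncard_image_of_injective _ (edge_injective hr), Set.ncard_coe_finset,
    card_powersetCard, card_univ, Fintype.card_option, Fintype.card_fin]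

theorem isPartite_edges (r h : ℕ) : IsPartite r Prod.fst (edges r h) := by
  rintro _ ⟨A, -, rfl⟩
  exact Set.ncard_range_inter_fst_preimage (vertex_fst A)

theorem exists_vertex_mem_transversal {A B : Finset (Option (Fin r))} (hcard : #A = #B)
    (hne : A ≠ B) : ∃ i, vertex A i ∈ transversal B := by
  by_cases hA : none ∈ A
  · obtain ⟨x, hxB, hxA⟩ :=
      not_subset.1 fun hBA => hne (eq_of_subset_of_card_le hBA hcard.le).symm
    cases x with
    | none => exact absurd hA hxA
    | some i => exact ⟨i, i, by simp [vertex, hxA, hA, hxB]⟩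
  · obtain ⟨x, hxA, hxB⟩ := not_subset.1 fun hAB => hne (eq_of_subset_of_card_le hAB hcard.ge)
    cases x with
    | none => exact absurd hxA hA
    | some i => exact ⟨i, i, by simp [vertex, hxA, hA, hxB]⟩

theorem partiteCoverProperty_edges (hr : 0 < r) {h k : ℕ} (hk : k < (r + 1).choose h) :
    PartiteCoverProperty r Prod.fst (edges r h) k := by
  intro S hS hSk
  obtain ⟨B, hB, hBS⟩ : ∃ B ∈ powersetCard h univ, edge B ∉ S := by
    by_contra! hall
    have hsub : edges r h ⊆ S := by
      rintro _ ⟨B, hB, rfl⟩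
      exact hall B hB
    have := Set.ncard_le_ncard hsub (Set.toFinite S)
    rw [ncard_edges hr] at this
    omega
  refine ⟨transversal B, ?_, Set.ncard_range_inter_fst_preimage fun _ => rfl⟩
  intro s hs
  obtain ⟨A, hA, rfl⟩ := hS hs
  simp only [mem_coe, mem_powersetCard_univ] at hA hB
  obtain ⟨i, hi⟩ :=
    exists_vertex_mem_transversal (hA.trans hB.symm) (by rintro rfl; exact hBS hs)
  exact ⟨vertex A i, Set.mem_range_self i, hi⟩

def hubParts (T : Finset (Vertex r)) (b : Bool) : Finset (Fin r) :=
  (T.filter fun v => v.2.getLeft? = some b).image Prod.fst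

/-- The first family, written through complements, consists of the sets containing `none` and
every `some i` with `(i, false) ∈ T`. -/
def hubAvoiding (h : ℕ) (T : Finset (Vertex r)) : Finset (Finset (Option (Fin r))) :=
  (powersetCard (r + 1 - h) (insert none ((hubParts T false).map .some))ᶜ).image compl ∪
    powersetCard h (insert none ((hubParts T true).map .some))ᶜ

theorem card_hubParts_add_le (T : Finset (Vertex r)) :
    #(hubParts T false) + #(hubParts T true) + #(T.filter fun v => v.2.getLeft? = none) ≤
      #T := by
  have hfib := card_eq_sum_card_fiberwise (f := fun v : Vertex r => v.2.getLeft?) (s := T)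
    (t := univ) fun _ _ => mem_univ _
  rw [Fintype.sum_option, Fintype.sum_bool] at hfib
  have := card_image_le (s := T.filter fun v => v.2.getLeft? = some false) (f := Prod.fst)
  have := card_image_le (s := T.filter fun v => v.2.getLeft? = some true) (f := Prod.fst)
  unfold hubParts
  omega

theorem notMem_of_mem_powersetCard_compl {m : ℕ} {W : Finset (Fin r)}
    {s : Finset (Option (Fin r))} (hs : s ∈ powersetCard m (insert none (W.map .some))ᶜ) :
    none ∉ s ∧ ∀ i ∈ W, some i ∉ s := by
  have hs := (mem_powersetCard.1 hs).1
  exact ⟨fun hn => mem_compl.1 (hs hn) (mem_insert_self _ _),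
    fun i hi hn => mem_compl.1 (hs hn) (mem_insert_of_mem (mem_map_of_mem _ hi))⟩

theorem card_hubAvoiding (h : ℕ) (T : Finset (Vertex r)) :
    #(hubAvoiding h T) =
      (r - #(hubParts T false)).choose (r + 1 - h) + (r - #(hubParts T true)).choose h := by
  have hcard : ∀ W : Finset (Fin r), #(insert none (W.map .some))ᶜ = r - #W := by
    intro W
    rw [card_compl, card_insert_of_notMem (by simp), card_map, Fintype.card_option,
      Fintype.card_fin]
    omega
  have hdisj : Disjoint
      ((powersetCard (r + 1 - h) (insert none ((hubParts T false).map .some))ᶜ).image compl)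
      (powersetCard h (insert none ((hubParts T true).map .some))ᶜ) := by
    rw [disjoint_left]
    rintro _ hA hB
    obtain ⟨C, hC, rfl⟩ := mem_image.1 hA
    exact (notMem_of_mem_powersetCard_compl hB).1
      (mem_compl.2 (notMem_of_mem_powersetCard_compl hC).1)
  rw [hubAvoiding, card_union_of_disjoint hdisj, card_image_of_injective _ compl_injective,
    card_powersetCard, card_powersetCard, hcard, hcard]

theorem card_of_mem_hubAvoiding {h : ℕ} (hh : h ≤ r + 1) {T : Finset (Vertex r)}
    {A : Finset (Option (Fin r))} (hA : A ∈ hubAvoiding h T) : #A = h := by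
  rcases mem_union.1 hA with hA | hA
  · obtain ⟨C, hC, rfl⟩ := mem_image.1 hA
    rw [card_compl, (mem_powersetCard.1 hC).2, Fintype.card_option, Fintype.card_fin]
    omega
  · exact (mem_powersetCard.1 hA).2

theorem vertex_snd_eq_inr_of_mem_hubAvoiding {h : ℕ} {T : Finset (Vertex r)}
    {A : Finset (Option (Fin r))} (hA : A ∈ hubAvoiding h T) {i : Fin r}
    (hi : vertex A i ∈ T) : (vertex A i).2 = .inr A := by
  rcases hv : (vertex A i).2 with b | B
  · exfalso
    obtain ⟨hb₁, hb₂⟩ := vertex_snd_eq_inl hv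
    have hpart : i ∈ hubParts T b :=
      mem_image.2 ⟨vertex A i, mem_filter.2 ⟨hi, by simp [hv]⟩, by simp⟩
    rcases mem_union.1 hA with hA | hA
    · obtain ⟨C, hC, rfl⟩ := mem_image.1 hA
      obtain ⟨hnone, hsome⟩ := notMem_of_mem_powersetCard_compl hC
      cases b <;> simp_all
    · obtain ⟨hnone, hsome⟩ := notMem_of_mem_powersetCard_compl hA
      cases b <;> simp_all
  · rw [vertex_snd_eq_inr hv]

theorem exists_forall_vertex_notMem {h : ℕ} (h₁ : 1 ≤ h) (h₂ : h ≤ r)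
    {T : Finset (Vertex r)} (hT : #T ≤ r) :
    ∃ A : Finset (Option (Fin r)), #A = h ∧ ∀ i, vertex A i ∉ T := by
  have hlt : #(T.filter fun v => v.2.getLeft? = none) < #(hubAvoiding h T) := by
    have := card_hubParts_add_le T
    have := Nat.add_one_le_choose_add (n := r - #(hubParts T false)) (m := r + 1 - h) (by omega)
    have := Nat.add_one_le_choose_add (n := r - #(hubParts T true)) h₁
    rw [card_hubAvoiding]
    omega
  obtain ⟨A, hA, hAT⟩ : ∃ A ∈ hubAvoiding h T, ∀ i, vertex A i ∉ T := by
    by_contra! hall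
    have hsub : hubAvoiding h T ⊆
        (T.filter fun v => v.2.getLeft? = none).image fun v => v.2.elim (fun _ => ∅) id := by
      intro A hA
      obtain ⟨i, hi⟩ := hall A hA
      have hv := vertex_snd_eq_inr_of_mem_hubAvoiding hA hi
      exact mem_image.2 ⟨vertex A i, mem_filter.2 ⟨hi, by simp [hv]⟩, by simp [hv]⟩
    exact (card_le_card hsub |>.trans card_image_le).not_gt hlt
  exact ⟨A, card_of_mem_hubAvoiding (by omega) hA, hAT⟩

theorem lt_coverNumber_edges {h : ℕ} (h₁ : 1 ≤ h) (h₂ : h ≤ r) :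
    r < coverNumber (edges r h) := by
  apply lt_coverNumber
  · rintro _ ⟨A, -, rfl⟩
    exact ⟨_, Set.mem_range_self ⟨0, by omega⟩⟩
  · intro T hT
    by_contra! hle
    obtain ⟨A, hA, hAT⟩ := exists_forall_vertex_notMem h₁ h₂
      (T := (Set.toFinite T).toFinset) (by rwa [← Set.ncard_eq_toFinset_card])
    obtain ⟨_, ⟨i, rfl⟩, hi⟩ := hT (edge A) ⟨A, by simpa using hA, rfl⟩
    exact hAT i ((Set.toFinite T).mem_toFinset.2 hi)

end HubHypergraph

/-- for `k < C(r, ⌊(r+1)/2⌋) + C(r, ⌈(r+1)/2⌉)`, there is an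
`r`-partite `r`-graph with the `(r,k)`-cover property whose cover number exceeds `r`. -/
theorem stmt15 (r k : ℕ) (hr : 2 ≤ r)
    (hk : k < r.choose ((r + 1) / 2) + r.choose ((r + 2) / 2)) :
    ∃ (n : ℕ) (part : Fin n → Fin r) (E : Set (Set (Fin n))),
      IsPartite r part E ∧ PartiteCoverProperty r part E k ∧ r < coverNumber E := by
  rw [← Nat.choose_succ_div_two] at hk
  let e := Fintype.equivFin (HubHypergraph.Vertex r)
  refine ⟨_, Prod.fst ∘ e.symm, Set.image e '' HubHypergraph.edges r ((r + 2) / 2),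
    (HubHypergraph.isPartite_edges _ _).image_equiv e,
    (HubHypergraph.partiteCoverProperty_edges (by omega) hk).image_equiv e, ?_⟩
  rw [coverNumber_image_equiv]
  exact HubHypergraph.lt_coverNumber_edges (by omega) (by omega)
end

section
/- Let r ≥ 1 be an integer and let G be a finite simple graph on n vertices with minimum degree δ(G) ≥ (1 − 1/2^r)·n. Then for every edge-colouring of G with colours 1,…,r, there exist monochromatic components C_1,…,C_r, where C_i is a monochromatic component of colour i, whose union is the whole vertex set of G (i.e., V(G) can be covered by monochromatic components of pairwise distinct colours). -/
open Finset

section CrossAgreement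

variable {σ ι : Type*} [Fintype σ]

theorem linearIndependent_prod_compl_neg_of_cross_agreement [DecidableEq σ] {K : Type*} [Field K]
    (a p : ι → σ → K) (hdiag : ∀ j i, p j i ≠ a j i)
    (hcross : ∀ j k, j ≠ k → ∃ i, p k i = a j i) :
    LinearIndependent K (fun j (S : Finset σ) => ∏ i ∈ Sᶜ, -a j i) := by
  rw [linearIndependent_iff']
  intro s g hg k hk
  -- Pairing with `f ↦ ∑ S, (∏ i ∈ S, p k i) * f S` sends the `j`-th vector to `∏ i, (p k i - a j i)`.
  have hpair := congrArg (fun f => ∑ S, (∏ i ∈ S, p k i) * f S) hg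
  simp only [Finset.sum_apply, Pi.smul_apply, smul_eq_mul, Pi.zero_apply, mul_zero,
    sum_const_zero, Finset.mul_sum] at hpair
  rw [sum_comm] at hpair
  have hj : ∀ j, ∑ S : Finset σ, (∏ i ∈ S, p k i) * (g j * ∏ i ∈ Sᶜ, -a j i)
      = g j * ∏ i, (p k i - a j i) := by
    intro j
    simp only [sub_eq_add_neg, Fintype.prod_add, Finset.mul_sum]
    exact sum_congr rfl fun S _ => by ring
  simp only [hj] at hpair
  rw [sum_eq_single_of_mem k hk fun j _ hjk => by
    obtain ⟨i, hi⟩ := hcross j k hjk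
    rw [prod_eq_zero (mem_univ i) (by rw [hi, sub_self]), mul_zero]] at hpair
  exact (mul_eq_zero.1 hpair).resolve_right
    (prod_ne_zero_iff.2 fun i _ => sub_ne_zero_of_ne (hdiag k i))

theorem card_le_two_pow_of_cross_agreement [Fintype ι] {α : σ → Type*} [∀ i, Countable (α i)]
    (a p : ι → (i : σ) → α i) (hdiag : ∀ j i, p j i ≠ a j i)
    (hcross : ∀ j k, j ≠ k → ∃ i, p k i = a j i) :
    Fintype.card ι ≤ 2 ^ Fintype.card σ := by
  classical
  choose e he using fun i => Countable.exists_injective_nat (α i)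
  have := (linearIndependent_prod_compl_neg_of_cross_agreement
    (fun j i => (e i (a j i) : ℚ)) (fun j i => (e i (p j i) : ℚ))
    (fun j i h => hdiag j i (he i (Nat.cast_injective h)))
    (fun j k hjk => (hcross j k hjk).imp fun i h => by rw [h])).fintype_card_le_finrank
  rwa [Module.finrank_pi, Fintype.card_finset] at this

end CrossAgreement

section ComponentCover

variable {σ V : Type*}

def CoversByComponents (H : σ → SimpleGraph V) (t : σ → V) (S : Set V) : Prop :=
  ∀ v ∈ S, ∃ i, (H i).Reachable (t i) v

theorem exists_minimal_uncovered (H : σ → SimpleGraph V) (S : Finset V)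
    (hS : ∀ t, ¬ CoversByComponents H t S) :
    ∃ M : Finset V, (∀ t, ¬ CoversByComponents H t M) ∧
      ∀ v ∈ M, ∃ t, CoversByComponents H t (↑M \ {v}) := by
  classical
  obtain ⟨M, -, hM⟩ := exists_minimal_le_of_wellFoundedLT
    (fun M : Finset V => ∀ t, ¬ CoversByComponents H t M) S hS
  refine ⟨M, hM.prop, fun v hv => ?_⟩
  have hlt : M.erase v < M := erase_ssubset hv
  by_contra! h
  exact hlt.not_ge (hM.le_of_le (by simpa using h) hlt.le)

theorem card_le_two_pow_of_minimal_uncovered [Fintype σ] [Finite V] (H : σ → SimpleGraph V)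
    (M : Finset V) (hM : ∀ t, ¬ CoversByComponents H t M)
    (hmin : ∀ v ∈ M, ∃ t, CoversByComponents H t (↑M \ {v})) :
    M.card ≤ 2 ^ Fintype.card σ := by
  choose t ht using hmin
  have hmiss : ∀ (v : M) i, ¬ (H i).Reachable (t v v.2 i) v := by
    intro v i hreach
    refine hM (t v v.2) fun w hw => ?_
    by_cases hwv : w = v
    · exact ⟨i, hwv ▸ hreach⟩
    · exact ht v v.2 w ⟨hw, hwv⟩
  rw [← Fintype.card_coe M]
  refine card_le_two_pow_of_cross_agreement (α := fun i => (H i).ConnectedComponent)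
    (fun v i => (H i).connectedComponentMk v) (fun v i => (H i).connectedComponentMk (t v v.2 i))
    (fun v i h => hmiss v i (SimpleGraph.ConnectedComponent.eq.1 h)) fun v w hvw => ?_
  obtain ⟨i, hi⟩ := ht w w.2 v ⟨v.2, fun h => hvw (Subtype.ext h)⟩
  exact ⟨i, SimpleGraph.ConnectedComponent.eq.2 hi⟩

end ComponentCover

theorem SimpleGraph.exists_forall_eq_or_adj_of_card_mul_le {V : Type*} [Fintype V]
    (G : SimpleGraph V) [DecidableRel G.Adj] {M : Finset V} (hM : M.Nonempty)
    (h : M.card * (Fintype.card V - G.minDegree) ≤ Fintype.card V) :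
    ∃ x, ∀ v ∈ M, x = v ∨ G.Adj v x := by
  classical
  set n := Fintype.card V
  set bad := M.biUnion fun v => (G.neighborFinset v)ᶜ.erase v
  obtain ⟨v₀, hv₀⟩ := hM
  have hδ : G.minDegree < n := (G.minDegree_le_degree v₀).trans_lt (G.degree_lt_card_verts v₀)
  have hbad_le : ∀ v ∈ M, ((G.neighborFinset v)ᶜ.erase v).card ≤ n - G.minDegree - 1 := by
    intro v _
    rw [card_erase_of_mem (by simp), card_compl, card_neighborFinset_eq_degree]
    have := G.minDegree_le_degree v
    omega
  have hbad : bad.card < n :=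
    calc bad.card ≤ M.card * (n - G.minDegree - 1) := card_biUnion_le_card_mul _ _ _ hbad_le
      _ = M.card * (n - G.minDegree) - M.card := Nat.mul_sub_one _ _
      _ < n := by have := card_pos.2 ⟨v₀, hv₀⟩; omega
  obtain ⟨x, -, hx⟩ := exists_mem_notMem_of_card_lt_card (t := univ) (hbad.trans_eq card_univ.symm)
  refine ⟨x, fun v hv => ?_⟩
  have : x ∉ (G.neighborFinset v)ᶜ.erase v := fun h => hx (mem_biUnion.2 ⟨v, hv, h⟩)
  simpa [or_iff_not_imp_left, eq_comm] using this

theorem mul_sub_le_of_one_sub_inv_mul_le {m n d : ℕ} {q : ℝ} (hq : 0 < q) (hm : (m : ℝ) ≤ q)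
    (h : (1 - 1 / q) * n ≤ d) : m * (n - d) ≤ n := by
  rcases le_total n d with hnd | hdn
  · simp [Nat.sub_eq_zero_of_le hnd]
  have hgap : ((n - d : ℕ) : ℝ) ≤ n / q := by
    rw [Nat.cast_sub hdn]
    have : (1 - 1 / q) * n = n - n / q := by ring
    linarith
  have : (m : ℝ) * (n - d : ℕ) ≤ n :=
    calc (m : ℝ) * (n - d : ℕ) ≤ q * (n / q) := mul_le_mul hm hgap (by positivity) hq.le
      _ = n := by field_simp
  exact_mod_cast this

/-- if `G` is a graph on `n` vertices with minimum degree at least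
`(1 - 1/2^r)·n`, then in every `r`-edge-colouring of `G` the vertex set can be
covered by monochromatic components of pairwise distinct colours (one component
of each colour, `f i` being a representative vertex of the colour-`i` component). -/
theorem stmt18 {V : Type*} [Fintype V] [Nonempty V] (r : ℕ) (hr : 1 ≤ r)
    (G : SimpleGraph V) [DecidableRel G.Adj]
    (hdeg : ((1 : ℝ) - 1 / 2 ^ r) * (Fintype.card V : ℝ) ≤ (G.minDegree : ℝ))
    (c : Sym2 V → Fin r) :
    ∃ f : Fin r → V, ∀ v : V, ∃ i : Fin r,
      (colorSubgraph G c i).Reachable (f i) v := by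
  by_contra! hno
  obtain ⟨M, hMunc, hMmin⟩ := exists_minimal_uncovered (colorSubgraph G c) univ fun t ht => by
    obtain ⟨v, hv⟩ := hno t
    obtain ⟨i, hi⟩ := ht v (by simp)
    exact hv i hi
  have hMne : M.Nonempty := by
    rw [nonempty_iff_ne_empty]
    rintro rfl
    exact hMunc (fun _ => Classical.arbitrary V) (by simp [CoversByComponents])
  have hcard : M.card ≤ 2 ^ r := by
    simpa using card_le_two_pow_of_minimal_uncovered _ M hMunc hMmin
  obtain ⟨x, hx⟩ := G.exists_forall_eq_or_adj_of_card_mul_le hMne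
    (mul_sub_le_of_one_sub_inv_mul_le (by positivity) (by exact_mod_cast hcard) hdeg)
  refine hMunc (fun _ => x) fun v hv => ?_
  rcases hx v hv with rfl | hadj
  · exact ⟨⟨0, hr⟩, .refl _⟩
  · exact ⟨c s(x, v), SimpleGraph.Adj.reachable ⟨hadj.symm, rfl⟩⟩
end
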